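/- Let Γ = (ω^ω, E) be a graph on the Baire space with E closed, 𝔭 a coloring with 𝔭(η) depending only on η(0), G = G(Γ, 𝔭), and let d be the left-invariant ultrametric on G given by d(g, h) = 2^{−n(g^{−1}h)} for g ≠ h (where n(x) is the least 0 < n < ω with π_n(x) ≠ e) and d(g, g) = 0. Then the metric space (G, d) is separable, i.e., it has a countable dense subset. -/

import Mathlib

/-- The defining relations of the graph product of cyclic groups `G(Γ, 𝔭)`:
for each vertex `a` the relation `a ^ 𝔭(a) = 1` (where the value `𝔭(a) = 0`
encodes `∞`, i.e. no relation), and for each edge `a E b` the commutator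
relation `a b a⁻¹ b⁻¹ = 1`. -/
def graphProdRels {V : Type*} (E : V → V → Prop) (p : V → ℕ) : Set (FreeGroup V) :=
  {w | ∃ a : V, w = FreeGroup.of a ^ p a} ∪
  {w | ∃ a b : V, E a b ∧
    w = FreeGroup.of a * FreeGroup.of b * (FreeGroup.of a)⁻¹ * (FreeGroup.of b)⁻¹}

/-- The graph product of cyclic groups `G(Γ, 𝔭)`. -/
abbrev GraphProd {V : Type*} (E : V → V → Prop) (p : V → ℕ) : Type _ :=
  PresentedGroup (graphProdRels E p)

/-- The generator of `G(Γ, 𝔭)` corresponding to the vertex `v`. -/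
def GraphProd.gen {V : Type*} (E : V → V → Prop) (p : V → ℕ) (v : V) : GraphProd E p :=
  PresentedGroup.of v

/-- The restriction `η ↾ n ∈ ω^n` of `η ∈ ω^ω`. -/
def res (n : ℕ) (η : ℕ → ℕ) : Fin n → ℕ := fun i => η i

/-- The edge relation `E_n` on `ω^n`: two sequences are adjacent iff they have
`E`-adjacent extensions in the Baire space. -/
def En (E : (ℕ → ℕ) → (ℕ → ℕ) → Prop) (n : ℕ) : (Fin n → ℕ) → (Fin n → ℕ) → Prop :=
  fun η ν => ∃ η' ν' : ℕ → ℕ, E η' ν' ∧ res n η' = η ∧ res n ν' = ν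

/-- The coloring `𝔭_n` on `ω^n`, given by `𝔭_n(η) = 𝔭(η')` for an extension
`η'` of `η` (well defined for `n ≥ 1` when `𝔭(η)` depends only on `η(0)`). -/
def pn (p : (ℕ → ℕ) → ℕ) (n : ℕ) : (Fin n → ℕ) → ℕ :=
  fun η => p fun k => if h : k < n then η ⟨k, h⟩ else 0
/-!
A nontrivial `g ∈ G(Γ, 𝔭)` is a word in finitely many generators `S ⊆ ω^ω`. For large `m`,
`η ↦ η ↾ m` is injective on `S` and, `E` being closed, creates no new `E_m`-edges inside `S`; so
`η ↾ m ↦ η` extends to a homomorphism `G_m → G` that inverts `π_m` on `⟨S⟩`, whence `π_m g ≠ e`.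
Thus `d(g) < 2^{-n}` whenever `π_m g = e` for all `0 < m ≤ n`. Since `η` and its truncation
`η ↾ n ⌢ 0^ω` have the same image under every `π_m` with `0 < m ≤ n`, the subgroup generated by
the countably many eventually-zero sequences is dense.
-/

open Filter Function Set Topology

theorem Subgroup.countable_closure {G : Type*} [Group G] {s : Set G} (hs : s.Countable) :
    (Subgroup.closure s : Set G).Countable := by
  have := hs.to_subtype
  rw [FreeGroup.closure_eq_range, MonoidHom.coe_range]
  exact countable_range _

namespace GraphProd

variable {V : Type*} {E : V → V → Prop} {p : V → ℕ}

theorem gen_pow (v : V) : gen E p v ^ p v = 1 :=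
  (map_pow (PresentedGroup.mk _) (FreeGroup.of v) (p v)).symm.trans
    (PresentedGroup.one_of_mem (Or.inl ⟨v, rfl⟩))

theorem commute_gen {a b : V} (h : E a b) : Commute (gen E p a) (gen E p b) := by
  have hrel := PresentedGroup.one_of_mem (rels := graphProdRels E p) (Or.inr ⟨a, b, h, rfl⟩)
  simp only [map_mul, map_inv] at hrel
  change gen E p a * gen E p b * (gen E p a)⁻¹ * (gen E p b)⁻¹ = 1 at hrel
  rw [mul_inv_eq_one, mul_inv_eq_iff_eq_mul] at hrel
  exact hrel

def lift {H : Type*} [Group H] (f : V → H) (hpow : ∀ v, f v ^ p v = 1)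
    (hcomm : ∀ a b, E a b → Commute (f a) (f b)) : GraphProd E p →* H :=
  PresentedGroup.toGroup (f := f) <| by
    rintro r (⟨v, rfl⟩ | ⟨a, b, hab, rfl⟩)
    · simp [hpow]
    · simp [(hcomm a b hab).eq]

@[simp]
theorem lift_gen {H : Type*} [Group H] (f : V → H) (hpow : ∀ v, f v ^ p v = 1)
    (hcomm : ∀ a b, E a b → Commute (f a) (f b)) (v : V) :
    lift f hpow hcomm (gen E p v) = f v :=
  PresentedGroup.toGroup.of _

theorem closure_range_gen : Subgroup.closure (range (gen E p)) = ⊤ :=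
  PresentedGroup.closure_range_of _

theorem exists_finite_mem_closure_gen (g : GraphProd E p) :
    ∃ S : Set V, S.Finite ∧ g ∈ Subgroup.closure (gen E p '' S) := by
  have hg : g ∈ Subgroup.closure (range (gen E p)) := closure_range_gen ▸ Subgroup.mem_top g
  induction hg using Subgroup.closure_induction with
  | mem _ h =>
    obtain ⟨v, rfl⟩ := h
    exact ⟨{v}, finite_singleton v, Subgroup.subset_closure (mem_image_of_mem _ rfl)⟩
  | one => exact ⟨∅, finite_empty, one_mem _⟩
  | mul _ _ _ _ hx hy =>
    obtain ⟨S, hS, hxS⟩ := hx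
    obtain ⟨T, hT, hyT⟩ := hy
    refine ⟨S ∪ T, hS.union hT, mul_mem ?_ ?_⟩
    · exact Subgroup.closure_mono (image_mono subset_union_left) hxS
    · exact Subgroup.closure_mono (image_mono subset_union_right) hyT
  | inv _ _ hx =>
    obtain ⟨S, hS, hxS⟩ := hx
    exact ⟨S, hS, inv_mem hxS⟩

theorem exists_hom_gen_eq_of_injOn {W : Type*} {E' : W → W → Prop} {p' : W → ℕ} {r : V → W}
    {S : Set V} (hinj : InjOn r S) (hp : ∀ η ∈ S, p' (r η) = p η)
    (hE : ∀ η ∈ S, ∀ ν ∈ S, E' (r η) (r ν) → E η ν ∨ η = ν) :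
    ∃ ψ : GraphProd E' p' →* GraphProd E p, ∀ η ∈ S, ψ (gen E' p' (r η)) = gen E p η := by
  classical
  let f : W → GraphProd E p := extend (fun η : S => r η) (fun η => gen E p η) 1
  have hf : ∀ w, f w = 1 ∨ ∃ η ∈ S, w = r η ∧ f w = gen E p η := by
    intro w
    by_cases hw : ∃ η : S, r η = w
    · obtain ⟨η, rfl⟩ := hw
      exact Or.inr ⟨η, η.2, rfl, hinj.injective.extend_apply _ _ η⟩
    · exact Or.inl (extend_apply' _ _ w hw)
  refine ⟨lift f ?_ ?_, fun η hη => ?_⟩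
  · intro w
    rcases hf w with h | ⟨η, hη, rfl, h⟩
    · rw [h, one_pow]
    · rw [h, hp η hη, gen_pow]
  · intro a b hab
    rcases hf a with ha | ⟨η, hη, rfl, ha⟩
    · rw [ha]; exact Commute.one_left _
    rcases hf b with hb | ⟨ν, hν, rfl, hb⟩
    · rw [hb]; exact Commute.one_right _
    rw [ha, hb]
    rcases hE η hη ν hν hab with h | rfl
    · exact commute_gen h
    · exact Commute.refl _
  · rw [lift_gen]
    exact hinj.injective.extend_apply _ _ ⟨η, hη⟩

end GraphProd

theorem eventually_res_ne {η ν : ℕ → ℕ} (h : η ≠ ν) : ∀ᶠ m in atTop, res m η ≠ res m ν := by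
  obtain ⟨k, hk⟩ := Function.ne_iff.1 h
  filter_upwards [eventually_gt_atTop k] with m hm heq
  exact hk (congrFun heq ⟨k, hm⟩)

theorem tendsto_of_forall_lt_eq {α : Type*} [TopologicalSpace α] {f : ℕ → ℕ → α} {η : ℕ → α}
    (h : ∀ j, ∀ i < j, f j i = η i) : Tendsto f atTop (𝓝 η) :=
  tendsto_pi_nhds.2 fun i =>
    tendsto_const_nhds.congr' <| (eventually_gt_atTop i).mono fun j hj => (h j i hj).symm

theorem eventually_not_En_res {E : (ℕ → ℕ) → (ℕ → ℕ) → Prop}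
    (hE : IsClosed {q : (ℕ → ℕ) × (ℕ → ℕ) | E q.1 q.2}) {η ν : ℕ → ℕ} (h : ¬ E η ν) :
    ∀ᶠ m in atTop, ¬ En E m (res m η) (res m ν) := by
  by_contra hfreq
  rw [not_eventually, frequently_atTop] at hfreq
  simp only [not_not] at hfreq
  have hext : ∀ j, ∃ η' ν' : ℕ → ℕ, E η' ν' ∧ (∀ i < j, η' i = η i) ∧ ∀ i < j, ν' i = ν i := by
    intro j
    obtain ⟨m, hjm, η', ν', hE', hη', hν'⟩ := hfreq j
    exact ⟨η', ν', hE', fun i hi => congrFun hη' ⟨i, hi.trans_le hjm⟩,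
      fun i hi => congrFun hν' ⟨i, hi.trans_le hjm⟩⟩
  choose f g hfg hf hg using hext
  exact h <| hE.mem_of_tendsto
    ((tendsto_of_forall_lt_eq hf).prodMk_nhds (tendsto_of_forall_lt_eq hg))
    (Eventually.of_forall hfg)

theorem pn_res {p : (ℕ → ℕ) → ℕ} (hdep : ∀ η ν : ℕ → ℕ, η 0 = ν 0 → p η = p ν) {m : ℕ}
    (hm : 0 < m) (η : ℕ → ℕ) : pn p m (res m η) = p η :=
  hdep _ _ (by simp [res, hm])

def zeroExtend (n : ℕ) (a : Fin n → ℕ) : ℕ → ℕ := fun k => if h : k < n then a ⟨k, h⟩ else 0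

theorem res_zeroExtend_res {m n : ℕ} (hmn : m ≤ n) (η : ℕ → ℕ) :
    res m (zeroExtend n (res n η)) = res m η := by
  funext i
  simp [res, zeroExtend, i.2.trans_le hmn]

theorem countable_iUnion_range_zeroExtend : (⋃ n, range (zeroExtend n)).Countable :=
  countable_iUnion fun _ => countable_range _

section Restriction

variable {E : (ℕ → ℕ) → (ℕ → ℕ) → Prop} {p : (ℕ → ℕ) → ℕ}
  {π : ∀ n : ℕ, GraphProd E p →* GraphProd (En E n) (pn p n)}

theorem exists_mem_closure_zeroExtend_map_eq
    (hπ : ∀ n : ℕ, 0 < n → ∀ η : ℕ → ℕ,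
      π n (GraphProd.gen E p η) = GraphProd.gen (En E n) (pn p n) (res n η))
    (g : GraphProd E p) (n : ℕ) :
    ∃ x ∈ Subgroup.closure (GraphProd.gen E p '' ⋃ n, range (zeroExtend n)),
      ∀ m, 0 < m → m ≤ n → π m x = π m g := by
  have hg : g ∈ Subgroup.closure (range (GraphProd.gen E p)) :=
    GraphProd.closure_range_gen ▸ Subgroup.mem_top g
  induction hg using Subgroup.closure_induction with
  | mem _ h =>
    obtain ⟨η, rfl⟩ := h
    refine ⟨_, Subgroup.subset_closure ⟨_, mem_iUnion.2 ⟨n, res n η, rfl⟩, rfl⟩,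
      fun m hm hmn => ?_⟩
    rw [hπ m hm, hπ m hm, res_zeroExtend_res hmn]
  | one => exact ⟨1, one_mem _, fun m _ _ => rfl⟩
  | mul _ _ _ _ hx hy =>
    obtain ⟨x, hx, hxg⟩ := hx
    obtain ⟨y, hy, hyg⟩ := hy
    exact ⟨x * y, mul_mem hx hy, fun m hm hmn => by
      rw [map_mul, map_mul, hxg m hm hmn, hyg m hm hmn]⟩
  | inv _ _ hx =>
    obtain ⟨x, hx, hxg⟩ := hx
    exact ⟨x⁻¹, inv_mem hx, fun m hm hmn => by rw [map_inv, map_inv, hxg m hm hmn]⟩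

theorem exists_pos_map_ne_one (hE : IsClosed {q : (ℕ → ℕ) × (ℕ → ℕ) | E q.1 q.2})
    (hdep : ∀ η ν : ℕ → ℕ, η 0 = ν 0 → p η = p ν)
    (hπ : ∀ n : ℕ, 0 < n → ∀ η : ℕ → ℕ,
      π n (GraphProd.gen E p η) = GraphProd.gen (En E n) (pn p n) (res n η))
    {g : GraphProd E p} (hg : g ≠ 1) : ∃ m, 0 < m ∧ π m g ≠ 1 := by
  obtain ⟨S, hS, hgS⟩ := GraphProd.exists_finite_mem_closure_gen g
  have hsep : ∀ᶠ m in atTop, 0 < m ∧ ∀ η ∈ S, ∀ ν ∈ S,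
      (η ≠ ν → res m η ≠ res m ν) ∧ (En E m (res m η) (res m ν) → E η ν ∨ η = ν) := by
    refine (eventually_gt_atTop 0).and <| hS.eventually_all.2 fun η _ =>
      hS.eventually_all.2 fun ν _ => ?_
    by_cases hην : η = ν
    · exact Eventually.of_forall fun _ => ⟨fun h => (h hην).elim, fun _ => Or.inr hην⟩
    by_cases hEην : E η ν
    · exact (eventually_res_ne hην).mono fun _ hm => ⟨fun _ => hm, fun _ => Or.inl hEην⟩
    · filter_upwards [eventually_res_ne hην, eventually_not_En_res hE hEην] with m hne hnE
      exact ⟨fun _ => hne, fun h => (hnE h).elim⟩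
  obtain ⟨m, hm, hmS⟩ := hsep.exists
  obtain ⟨ψ, hψ⟩ := GraphProd.exists_hom_gen_eq_of_injOn (S := S) (r := res m)
    (fun η hη ν hν h => not_imp_not.1 (hmS η hη ν hν).1 h) (fun η _ => pn_res hdep hm η)
    (fun η hη ν hν => (hmS η hη ν hν).2)
  have hretract :
      EqOn (ψ.comp (π m)) (MonoidHom.id _) (Subgroup.closure (GraphProd.gen E p '' S)) :=
    MonoidHom.eqOn_closure <| by
      rintro _ ⟨η, hη, rfl⟩
      simp [hπ m hm, hψ η hη]
  refine ⟨m, hm, fun h => hg ?_⟩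
  simpa [h] using (hretract hgS).symm

end Restriction

theorem lt_two_zpow_neg_of_forall_map_eq_one {G : Type*} [Group G] {H : ℕ → Type*}
    [∀ n, Group (H n)]
    {π : ∀ n, G →* H n} {d : G → ℝ} (hsep : ∀ g : G, g ≠ 1 → ∃ m, 0 < m ∧ π m g ≠ 1)
    (hd1 : d 1 = 0)
    (hdval : ∀ (g : G) (n : ℕ), 0 < n → π n g ≠ 1 →
      (∀ m : ℕ, 0 < m → m < n → π m g = 1) → d g = (2 : ℝ) ^ (-(n : ℤ)))
    {g : G} {n : ℕ} (hg : ∀ m, 0 < m → m ≤ n → π m g = 1) : d g < (2 : ℝ) ^ (-(n : ℤ)) := by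
  classical
  by_cases h1 : g = 1
  · rw [h1, hd1]; positivity
  have hex := hsep g h1
  obtain ⟨hpos, hne⟩ := Nat.find_spec hex
  have hn : n < Nat.find hex := by
    by_contra! hle
    exact hne (hg _ hpos hle)
  rw [hdval g _ hpos hne fun m hm hlt => of_not_not fun hne => Nat.find_min hex hlt ⟨hm, hne⟩]
  exact zpow_lt_zpow_right₀ one_lt_two (by omega)

theorem separable_of_restriction_ultrametric_general
    (E : (ℕ → ℕ) → (ℕ → ℕ) → Prop)
    (hEclosed : IsClosed {q : (ℕ → ℕ) × (ℕ → ℕ) | E q.1 q.2})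
    (p : (ℕ → ℕ) → ℕ)
    (hdep : ∀ η ν : ℕ → ℕ, η 0 = ν 0 → p η = p ν)
    (π : ∀ n : ℕ, GraphProd E p →* GraphProd (En E n) (pn p n))
    (hπ : ∀ n : ℕ, 0 < n → ∀ η : ℕ → ℕ,
      π n (GraphProd.gen E p η) = GraphProd.gen (En E n) (pn p n) (res n η))
    (d : GraphProd E p → ℝ)
    (hd1 : d 1 = 0)
    (hdval : ∀ (g : GraphProd E p) (n : ℕ), 0 < n → π n g ≠ 1 →
      (∀ m : ℕ, 0 < m → m < n → π m g = 1) → d g = (2 : ℝ) ^ (-(n : ℤ))) :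
    ∃ D : Set (GraphProd E p), D.Countable ∧
      ∀ g : GraphProd E p, ∀ ε : ℝ, 0 < ε → ∃ x ∈ D, d (g⁻¹ * x) < ε := by
  refine ⟨Subgroup.closure (GraphProd.gen E p '' ⋃ n, range (zeroExtend n)),
    Subgroup.countable_closure (countable_iUnion_range_zeroExtend.image _),
    fun g ε hε => ?_⟩
  obtain ⟨n, hn⟩ := exists_pow_lt_of_lt_one hε (by norm_num : (2 : ℝ)⁻¹ < 1)
  obtain ⟨x, hx, hxg⟩ := exists_mem_closure_zeroExtend_map_eq hπ g n
  have hdist : d (g⁻¹ * x) < (2 : ℝ) ^ (-(n : ℤ)) :=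
    lt_two_zpow_neg_of_forall_map_eq_one (fun _ => exists_pos_map_ne_one hEclosed hdep hπ)
      hd1 hdval fun m hm hmn => by rw [map_mul, map_inv, hxg m hm hmn, inv_mul_cancel]
  refine ⟨x, hx, hdist.trans ?_⟩
  rwa [zpow_neg, zpow_natCast, ← inv_pow]

/-- **Lemma (separability).** Let `Γ = (ω^ω, E)` be a graph on the Baire space
with closed edge relation, `𝔭` a coloring by prime powers or `∞` (encoded as
`0`) depending only on `η(0)`, `G = G(Γ, 𝔭)`, `π n : G →* G_n` the restriction
homomorphisms, and `d : G → ℝ` the ultranorm with `d(e) = 0` and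
`d(g) = 2^{-n(g)}` for `n(g)` the least `0 < n` with `π n g ≠ e`, inducing the
left-invariant ultrametric `(g, h) ↦ d(g⁻¹h)`.  Then `(G, d)` is separable:
it has a countable dense subset. -/
theorem separable_of_restriction_ultrametric
    (E : (ℕ → ℕ) → (ℕ → ℕ) → Prop) (hEsym : Symmetric E)
    (hEclosed : IsClosed {q : (ℕ → ℕ) × (ℕ → ℕ) | E q.1 q.2})
    (p : (ℕ → ℕ) → ℕ) (hp : ∀ η, p η ≠ 0 → IsPrimePow (p η))
    (hdep : ∀ η ν : ℕ → ℕ, η 0 = ν 0 → p η = p ν)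
    (π : ∀ n : ℕ, GraphProd E p →* GraphProd (En E n) (pn p n))
    (hπ : ∀ n : ℕ, 0 < n → ∀ η : ℕ → ℕ,
      π n (GraphProd.gen E p η) = GraphProd.gen (En E n) (pn p n) (res n η))
    (d : GraphProd E p → ℝ)
    (hd1 : d 1 = 0)
    (hdval : ∀ (g : GraphProd E p) (n : ℕ), 0 < n → π n g ≠ 1 →
      (∀ m : ℕ, 0 < m → m < n → π m g = 1) → d g = (2 : ℝ) ^ (-(n : ℤ))) :
    ∃ D : Set (GraphProd E p), D.Countable ∧
      ∀ g : GraphProd E p, ∀ ε : ℝ, 0 < ε → ∃ x ∈ D, d (g⁻¹ * x) < ε :=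
  separable_of_restriction_ultrametric_general E hEclosed p hdep π hπ d hd1 hdval
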